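/- For k ≥ 2 and n ≥ 2k², the signless Laplacian spectral radius of F_{n,k} satisfies n + 2k − 5 < q(F_{n,k}) ≤ (n + 2k − 2 + sqrt((n+2k−6)² − 8(k²−4k+3)))/2. Moreover, if k ≥ 3 then q(F_{n,k}) ≤ n + 2k − 4. -/

import Mathlib

open scoped Classical

/-- The signless Laplacian matrix `Q(G) = D(G) + A(G)` of a graph. -/
noncomputable def Qmat {V : Type*} [Fintype V] [DecidableEq V] (G : SimpleGraph V) :
    Matrix V V ℝ :=
  Matrix.diagonal (fun v => (G.degree v : ℝ)) + G.adjMatrix ℝ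

/-- The signless Laplacian spectral radius `q(G)`: the largest eigenvalue of `Q(G)`. -/
noncomputable def qspec {V : Type*} [Fintype V] [DecidableEq V] (G : SimpleGraph V) : ℝ :=
  sSup (spectrum ℝ (Qmat G))

/-- The number of edges `e(G)`. -/
noncomputable def ecount {V : Type*} (G : SimpleGraph V) : ℕ := G.edgeSet.ncard

/-- `Contains G H` : `G` contains a copy of `H` as a (not necessarily induced) subgraph. -/
def Contains {V W : Type*} (G : SimpleGraph V) (H : SimpleGraph W) : Prop :=
  ∃ f : W → V, Function.Injective f ∧ ∀ a b, H.Adj a b → G.Adj (f a) (f b)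

/-- `k` vertex-disjoint copies of the path `P₃` on three vertices. -/
def kP3 (k : ℕ) : SimpleGraph (Fin k × Fin 3) where
  Adj x y := x.1 = y.1 ∧ (x.2.val + 1 = y.2.val ∨ y.2.val + 1 = x.2.val)
  symm := ⟨fun x y h => ⟨h.1.symm, h.2.symm⟩⟩
  loopless := ⟨fun x h => by omega⟩

/-- The linear forest `P_{a 0} ∪ P_{a 1} ∪ ⋯ ∪ P_{a (k-1)}`. -/
def linearForest (k : ℕ) (a : Fin k → ℕ) : SimpleGraph (Σ i : Fin k, Fin (a i)) where
  Adj x y := x.1 = y.1 ∧ (x.2.val + 1 = y.2.val ∨ y.2.val + 1 = x.2.val)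
  symm := ⟨fun x y h => ⟨h.1.symm, h.2.symm⟩⟩
  loopless := ⟨fun x h => by omega⟩

/-- `S_{n,h} = K_h ∇ complement (K_{n-h})`, the join of a clique on `h` vertices
with an independent set on `n - h` vertices. -/
def Snh (n h : ℕ) : SimpleGraph (Fin n) where
  Adj u v := u ≠ v ∧ (u.val < h ∨ v.val < h)
  symm := ⟨fun u v h => ⟨h.1.symm, h.2.symm⟩⟩
  loopless := ⟨fun u h => h.1 rfl⟩

/-- `S⁺_{n,h}` : `S_{n,h}` with one extra edge (between vertices `h` and `h+1`)
inside the independent part. -/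
def Spnh (n h : ℕ) : SimpleGraph (Fin n) where
  Adj u v := u ≠ v ∧ (u.val < h ∨ v.val < h ∨
    (u.val = h ∧ v.val = h + 1) ∨ (u.val = h + 1 ∧ v.val = h))
  symm := ⟨fun u v h => ⟨h.1.symm, by tauto⟩⟩
  loopless := ⟨fun u h => h.1 rfl⟩

/-- `N₆` : the graph obtained from the triangle `{0,1,2}` by attaching pendant
vertices `3,4,5` to `0,1,2` respectively. -/
def N6 : SimpleGraph (Fin 6) where
  Adj u v := u ≠ v ∧ ((u.val < 3 ∧ v.val < 3) ∨ v.val = u.val + 3 ∨ u.val = v.val + 3)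
  symm := ⟨fun u v h => ⟨h.1.symm, by tauto⟩⟩
  loopless := ⟨fun u h => by omega⟩

/-- `F_{n,k}(H) = K_{k-1} ∇ (H ∪ p·K₂ ∪ K_s)` for a graph `H` on `h` vertices,
where `n - (k + h - 1) = 2p + s`, `0 ≤ s < 2`.  Vertices `0,…,k-2` form the
dominating clique, `H` is placed on vertices `k-1,…,k-2+h`, and the remaining
vertices form a matching (plus one isolated vertex when `s = 1`). -/
def FnkH (n k h : ℕ) (H : SimpleGraph (Fin h)) : SimpleGraph (Fin n) where
  Adj u v := u ≠ v ∧ (u.val < k - 1 ∨ v.val < k - 1 ∨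
    (∃ (hu : u.val - (k - 1) < h) (hv : v.val - (k - 1) < h),
      k - 1 ≤ u.val ∧ k - 1 ≤ v.val ∧
        H.Adj ⟨u.val - (k - 1), hu⟩ ⟨v.val - (k - 1), hv⟩) ∨
    (k - 1 + h ≤ u.val ∧ (u.val - (k - 1 + h)) % 2 = 0 ∧ v.val = u.val + 1) ∨
    (k - 1 + h ≤ v.val ∧ (v.val - (k - 1 + h)) % 2 = 0 ∧ u.val = v.val + 1))
  symm := by
    refine ⟨?_⟩
    rintro u v ⟨hne, h⟩
    refine ⟨hne.symm, ?_⟩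
    rcases h with h | h | ⟨hu, hv, h1, h2, h3⟩ | h | h
    · tauto
    · tauto
    · exact Or.inr (Or.inr (Or.inl ⟨hv, hu, h2, h1, h3.symm⟩))
    · tauto
    · tauto
  loopless := by
    refine ⟨?_⟩
    rintro u ⟨hne, _⟩
    exact hne rfl

/-- `F_{n,k} = F_{n,k}(K₂) = K_{k-1} ∇ (p·K₂ ∪ K_s)`. -/
def Fnk (n k : ℕ) : SimpleGraph (Fin n) := FnkH n k 2 ⊤

/-- `H_{n,1}` : obtained from `S_{n-2,2}` (on vertices `0,…,n-3`, with dominating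
vertices `0,1`) and a triangle `{0, n-2, n-1}`, identifying the max-degree vertex
`0` of `S_{n-2,2}` with a vertex of `K₃`. -/
def Hn1 (n : ℕ) : SimpleGraph (Fin n) where
  Adj u v := u ≠ v ∧ ((u.val < n - 2 ∧ v.val < n - 2 ∧ (u.val < 2 ∨ v.val < 2)) ∨
    ((u.val = 0 ∨ n - 2 ≤ u.val) ∧ (v.val = 0 ∨ n - 2 ≤ v.val)))
  symm := ⟨fun u v h => ⟨h.1.symm, by tauto⟩⟩
  loopless := ⟨fun u h => h.1 rfl⟩

/-- `L_{t,h} = K₁ ∇ (t·K_h)` : one vertex joined to `t` disjoint copies of `K_h`. -/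
def Lth (t h : ℕ) : SimpleGraph (Fin (t * h + 1)) where
  Adj u v := u ≠ v ∧ (u.val = 0 ∨ v.val = 0 ∨ (u.val - 1) / h = (v.val - 1) / h)
  symm := ⟨fun u v h => ⟨h.1.symm, by tauto⟩⟩
  loopless := ⟨fun u h => h.1 rfl⟩

/-- `L_{t₁,t₂,h,h+1} = K₁ ∇ (t₁·K_h ∪ t₂·K_{h+1})`. -/
def Lt1t2 (t1 t2 h : ℕ) : SimpleGraph (Fin (t1 * h + t2 * (h + 1) + 1)) where
  Adj u v := u ≠ v ∧ (u.val = 0 ∨ v.val = 0 ∨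
    (u.val ≤ t1 * h ∧ v.val ≤ t1 * h ∧ (u.val - 1) / h = (v.val - 1) / h) ∨
    (t1 * h < u.val ∧ t1 * h < v.val ∧
      (u.val - 1 - t1 * h) / (h + 1) = (v.val - 1 - t1 * h) / (h + 1)))
  symm := ⟨fun u v h => ⟨h.1.symm, by tauto⟩⟩
  loopless := ⟨fun u h => h.1 rfl⟩


section Stmt7Aux
open Matrix

lemma stmt7_algebraMap_mulVec {n : ℕ} (μ : ℝ) (v : Fin n → ℝ) :
    ((algebraMap ℝ (Matrix (Fin n) (Fin n) ℝ)) μ).mulVec v = μ • v := by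
  ext i
  simp [Matrix.mulVec, dotProduct, Matrix.algebraMap_matrix_apply]

lemma stmt7_eigvec_of_mem_spectrum {n : ℕ} (M : Matrix (Fin n) (Fin n) ℝ) (μ : ℝ)
    (h : μ ∈ spectrum ℝ M) : ∃ v : Fin n → ℝ, v ≠ 0 ∧ M.mulVec v = μ • v := by
  rw [spectrum.mem_iff, Matrix.isUnit_iff_isUnit_det, isUnit_iff_ne_zero, not_not,
    ← Matrix.exists_mulVec_eq_zero_iff] at h
  obtain ⟨v, hv, hv2⟩ := h
  refine ⟨v, hv, ?_⟩
  rw [Matrix.sub_mulVec, sub_eq_zero] at hv2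
  rw [← hv2, stmt7_algebraMap_mulVec]

lemma stmt7_dot_self_pos {n : ℕ} {v : Fin n → ℝ} (hv : v ≠ 0) : 0 < v ⬝ᵥ v := by
  have h1 : 0 ≤ v ⬝ᵥ v := Finset.sum_nonneg fun i _ => mul_self_nonneg _
  rcases h1.lt_or_eq with h | h
  · exact h
  · exfalso; apply hv; funext i
    have h2 := (Finset.sum_eq_zero_iff_of_nonneg (fun i _ => mul_self_nonneg (v i))).1 h.symm
    simpa [mul_self_eq_zero] using h2 i (Finset.mem_univ i)

lemma stmt7_spectrum_le {n : ℕ} (M : Matrix (Fin n) (Fin n) ℝ) (lam : ℝ)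
    (h : ∀ x : Fin n → ℝ, x ⬝ᵥ M.mulVec x ≤ lam * (x ⬝ᵥ x)) :
    ∀ μ ∈ spectrum ℝ M, μ ≤ lam := by
  intro μ hμ
  obtain ⟨v, hv, hMv⟩ := stmt7_eigvec_of_mem_spectrum M μ hμ
  have h1 := h v
  rw [hMv] at h1
  have h2 : v ⬝ᵥ (μ • v) = μ * (v ⬝ᵥ v) := by simp [dotProduct_smul, smul_eq_mul]
  rw [h2] at h1
  have h3 := stmt7_dot_self_pos hv
  exact le_of_mul_le_mul_right (by linarith) h3

lemma stmt7_dot_mulVec_symm {n : ℕ} (M : Matrix (Fin n) (Fin n) ℝ) (hM : Mᵀ = M)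
    (x : Fin n → ℝ) : (M.mulVec x) ⬝ᵥ x = x ⬝ᵥ M.mulVec x := by
  rw [dotProduct_mulVec, ← Matrix.mulVec_transpose, hM]

lemma stmt7_rayleigh_eq {n : ℕ} (M : Matrix (Fin n) (Fin n) ℝ) (hM : Mᵀ = M)
    (x : EuclideanSpace ℝ (Fin n)) :
    RCLike.re (inner ℝ ((Matrix.toEuclideanLin M) x) x : ℝ) / ‖x‖ ^ 2 =
      ((WithLp.equiv 2 _ x) ⬝ᵥ M.mulVec (WithLp.equiv 2 _ x)) /
        ((WithLp.equiv 2 _ x) ⬝ᵥ (WithLp.equiv 2 _ x)) := by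
  have h1 : (inner ℝ ((Matrix.toEuclideanLin M) x) x : ℝ) =
      (WithLp.equiv 2 _ x) ⬝ᵥ M.mulVec (WithLp.equiv 2 _ x) := by
    rw [Matrix.toEuclideanLin_apply, ← stmt7_dot_mulVec_symm M hM]
    simp [PiLp.inner_apply, dotProduct, mul_comm]
  have h2 : ‖x‖ ^ 2 = (WithLp.equiv 2 _ x) ⬝ᵥ (WithLp.equiv 2 _ x) := by
    rw [EuclideanSpace.norm_sq_eq]
    simp [dotProduct, Real.norm_eq_abs, sq_abs, sq]
  rw [h1, h2]
  simp

lemma stmt7_sSup_spectrum_ge {n : ℕ} (M : Matrix (Fin n) (Fin n) ℝ) (hM : Mᵀ = M) (lam : ℝ)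
    (hub : ∀ x : Fin n → ℝ, x ⬝ᵥ M.mulVec x ≤ lam * (x ⬝ᵥ x))
    (hBdd : BddAbove (spectrum ℝ M))
    (w : Fin n → ℝ) (hw : w ≠ 0) :
    (w ⬝ᵥ M.mulVec w) / (w ⬝ᵥ w) ≤ sSup (spectrum ℝ M) := by
  have hherm : M.IsHermitian := by
    rwa [Matrix.IsHermitian, Matrix.conjTranspose_eq_transpose_of_trivial]
  set E := EuclideanSpace ℝ (Fin n)
  set T : E →ₗ[ℝ] E := Matrix.toEuclideanLin M with hT
  have hsym : T.IsSymmetric := (Matrix.isHermitian_iff_isSymmetric).1 hherm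
  have hnt : Nontrivial E := by
    refine ⟨(WithLp.equiv 2 _).symm w, 0, ?_⟩
    intro h; apply hw; exact congrArg WithLp.ofLp h
  have hev : Module.End.HasEigenvalue T
      (⨆ x : { x : E // x ≠ 0 }, RCLike.re (inner ℝ (T x) (x : E) : ℝ) / ‖(x : E)‖ ^ 2) :=
    hsym.hasEigenvalue_iSup_of_finiteDimensional
  set μ : ℝ := (⨆ x : { x : E // x ≠ 0 }, RCLike.re (inner ℝ (T x) (x : E) : ℝ) / ‖(x : E)‖ ^ 2)
    with hμdef
  have hμmem : μ ∈ spectrum ℝ M := by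
    rw [← Matrix.spectrum_toEuclideanLin (𝕜 := ℝ)]
    exact hev.mem_spectrum
  have hbddr : BddAbove (Set.range fun x : { x : E // x ≠ 0 } =>
      RCLike.re (inner ℝ (T x) (x : E) : ℝ) / ‖(x : E)‖ ^ 2) := by
    refine ⟨lam, ?_⟩
    rintro z ⟨x, rfl⟩
    dsimp only [hT]
    rw [stmt7_rayleigh_eq M hM]
    have hx0 : (WithLp.equiv 2 _ (x : E)) ≠ 0 := by
      have := x.2; simpa using this
    have hpos := stmt7_dot_self_pos hx0
    rw [div_le_iff₀ hpos]
    exact hub _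
  have hle : (w ⬝ᵥ M.mulVec w) / (w ⬝ᵥ w) ≤ μ := by
    have hw' : ((WithLp.equiv 2 _).symm w : E) ≠ 0 := by
        intro h; apply hw; exact congrArg WithLp.ofLp h
    have h := le_ciSup hbddr ⟨(WithLp.equiv 2 _).symm w, hw'⟩
    rw [stmt7_rayleigh_eq M hM] at h
    rw [Equiv.apply_symm_apply] at h
    exact h
  exact hle.trans (le_csSup hBdd hμmem)

lemma stmt7_quad_bound {n : ℕ} (M : Matrix (Fin n) (Fin n) ℝ) (hsym : Mᵀ = M)
    (hpos : ∀ i j, 0 ≤ M i j) (w : Fin n → ℝ) (hw : ∀ i, 0 < w i) (lam : ℝ)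
    (hrow : ∀ i, M.mulVec w i ≤ lam * w i) (x : Fin n → ℝ) :
    x ⬝ᵥ M.mulVec x ≤ lam * (x ⬝ᵥ x) := by
  have hM : ∀ i j, M j i = M i j := fun i j => congrFun (congrFun hsym i) j
  have hexp : x ⬝ᵥ M.mulVec x = ∑ i, ∑ j, x i * (M i j * x j) := by
    simp only [dotProduct, Matrix.mulVec, Finset.mul_sum]
  rw [hexp]
  have key : ∀ i j, x i * (M i j * x j) ≤
      (M i j * (w j / w i) * x i ^ 2) / 2 + (M i j * (w i / w j) * x j ^ 2) / 2 := by
    intro i j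
    have hwi := hw i
    have hwj := hw j
    have h1 : 0 ≤ M i j := hpos i j
    rw [← sub_nonneg]
    have h2 : (M i j * (w j / w i) * x i ^ 2) / 2 + (M i j * (w i / w j) * x j ^ 2) / 2
        - x i * (M i j * x j) = (M i j / (2 * w i * w j)) *
          (w j * x i - w i * x j) ^ 2 := by
      field_simp
      ring
    rw [h2]
    have h3 : 0 ≤ M i j / (2 * w i * w j) := by positivity
    positivity
  have hswap : ∑ i, ∑ j, (M i j * (w i / w j) * x j ^ 2) / 2
      = ∑ i, ∑ j, (M i j * (w j / w i) * x i ^ 2) / 2 := by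
    rw [Finset.sum_comm]
    apply Finset.sum_congr rfl; intro i _
    apply Finset.sum_congr rfl; intro j _
    rw [hM i j]
  calc ∑ i, ∑ j, x i * (M i j * x j)
      ≤ ∑ i, ∑ j, ((M i j * (w j / w i) * x i ^ 2) / 2 + (M i j * (w i / w j) * x j ^ 2) / 2) :=
        Finset.sum_le_sum fun i _ => Finset.sum_le_sum fun j _ => key i j
    _ = ∑ i, ∑ j, (M i j * (w j / w i) * x i ^ 2) / 2
        + ∑ i, ∑ j, (M i j * (w i / w j) * x j ^ 2) / 2 := by
        rw [← Finset.sum_add_distrib]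
        apply Finset.sum_congr rfl; intro i _
        rw [← Finset.sum_add_distrib]
    _ = ∑ i, ∑ j, M i j * (w j / w i) * x i ^ 2 := by
        rw [hswap, ← Finset.sum_add_distrib]
        apply Finset.sum_congr rfl; intro i _
        rw [← Finset.sum_add_distrib]
        apply Finset.sum_congr rfl; intro j _
        ring
    _ = ∑ i, (x i ^ 2 / w i) * M.mulVec w i := by
        apply Finset.sum_congr rfl; intro i _
        rw [Matrix.mulVec, dotProduct, Finset.mul_sum]
        apply Finset.sum_congr rfl; intro j _
        have := (hw i).ne'
        field_simp
    _ ≤ ∑ i, (x i ^ 2 / w i) * (lam * w i) := by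
        apply Finset.sum_le_sum
        intro i _
        exact mul_le_mul_of_nonneg_left (hrow i) (div_nonneg (sq_nonneg _) (hw i).le)
    _ = lam * (x ⬝ᵥ x) := by
        rw [dotProduct, Finset.mul_sum]
        apply Finset.sum_congr rfl
        intro i _
        have := (hw i).ne'
        field_simp

lemma stmt7_card_filter_lt (n m : ℕ) (hm : m ≤ n) :
    (Finset.univ.filter (fun v : Fin n => v.val < m)).card = m := by
  have h : Finset.univ.filter (fun v : Fin n => v.val < m) =
      Finset.map (Fin.castLEEmb hm) Finset.univ := by
    ext v
    simp only [Finset.mem_filter, Finset.mem_univ, true_and, Finset.mem_map,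
      Fin.castLEEmb_apply]
    constructor
    · intro hv; exact ⟨⟨v.val, hv⟩, by ext; simp⟩
    · rintro ⟨a, rfl⟩; simp [Fin.castLE]
  rw [h, Finset.card_map, Finset.card_univ, Fintype.card_fin]

lemma stmt7_sum_ite_lt (n m : ℕ) (hm : m ≤ n) (a b : ℝ) :
    ∑ v : Fin n, (if v.val < m then a else b) = (m : ℝ) * a + ((n : ℝ) - m) * b := by
  rw [Finset.sum_ite, Finset.sum_const, Finset.sum_const, stmt7_card_filter_lt n m hm]
  have h2 : (Finset.univ.filter (fun v : Fin n => ¬ v.val < m)).card = n - m := by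
    have := Finset.card_filter_add_card_filter_not
      (s := Finset.univ) (p := fun v : Fin n => v.val < m)
    rw [Finset.card_univ, Fintype.card_fin, stmt7_card_filter_lt n m hm] at this
    omega
  rw [h2, nsmul_eq_mul, nsmul_eq_mul, Nat.cast_sub hm]

lemma stmt7_fnk_adj {n k : ℕ} (hk : 2 ≤ k) (u v : Fin n) :
    (Fnk n k).Adj u v ↔ u.val ≠ v.val ∧ (u.val < k - 1 ∨ v.val < k - 1 ∨
      (k - 1 ≤ u.val ∧ k - 1 ≤ v.val ∧ (u.val - (k-1)) / 2 = (v.val - (k-1)) / 2)) := by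
  show (u ≠ v ∧ _) ↔ _
  rw [Ne, Fin.ext_iff]
  constructor
  · rintro ⟨hne, h⟩
    refine ⟨hne, ?_⟩
    rcases h with h | h | ⟨hu, hv, h1, h2, h3⟩ | ⟨h1, h2, h3⟩ | ⟨h1, h2, h3⟩
    · tauto
    · tauto
    · right; right
      refine ⟨h1, h2, ?_⟩
      omega
    · right; right; omega
    · right; right; omega
  · rintro ⟨hne, h⟩
    refine ⟨hne, ?_⟩
    rcases h with h | h | ⟨h1, h2, h3⟩
    · tauto
    · tauto
    · rcases Nat.lt_or_ge u.val (k+1) with hu | hu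
      · rcases Nat.lt_or_ge v.val (k+1) with hv | hv
        · refine Or.inr (Or.inr (Or.inl ?_))
          refine ⟨by omega, by omega, h1, h2, ?_⟩
          simp only [SimpleGraph.top_adj, Ne, Fin.ext_iff]
          omega
        · exfalso; omega
      · rcases Nat.lt_or_ge v.val (k+1) with hv | hv
        · exfalso; omega
        · rcases Nat.lt_or_ge u.val v.val with hlt | hge
          · exact Or.inr (Or.inr (Or.inr (Or.inl ⟨by omega, by omega, by omega⟩)))
          · exact Or.inr (Or.inr (Or.inr (Or.inr ⟨by omega, by omega, by omega⟩)))

section rows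
variable {n k : ℕ}

lemma stmt7_nbr_clique (hk : 2 ≤ k) (u : Fin n) (hu : u.val < k - 1) :
    (Fnk n k).neighborFinset u = Finset.univ.erase u := by
  ext v
  rw [SimpleGraph.mem_neighborFinset, stmt7_fnk_adj hk, Finset.mem_erase]
  simp only [Finset.mem_univ, and_true, Ne, Fin.ext_iff]
  constructor
  · rintro ⟨h1, _⟩; omega
  · intro h1; exact ⟨by omega, Or.inl hu⟩

lemma stmt7_nbr_pairedA (hk : 2 ≤ k) (u : Fin n) (hu1 : k - 1 ≤ u.val)
    (hpar : (u.val - (k - 1)) % 2 = 0) (hlt : u.val + 1 < n) :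
    (Fnk n k).neighborFinset u =
      insert ⟨u.val + 1, hlt⟩ (Finset.univ.filter (fun v : Fin n => v.val < k - 1)) := by
  ext v
  rw [SimpleGraph.mem_neighborFinset, stmt7_fnk_adj hk, Finset.mem_insert, Finset.mem_filter]
  simp only [Finset.mem_univ, true_and, Fin.ext_iff]
  constructor
  · rintro ⟨h1, h2 | h2 | ⟨h2, h3, h4⟩⟩ <;> [omega; (right; exact h2); omega]
  · rintro (h1 | h1)
    · exact ⟨by omega, Or.inr (Or.inr ⟨hu1, by omega, by omega⟩)⟩
    · exact ⟨by omega, Or.inr (Or.inl h1)⟩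

lemma stmt7_nbr_pairedB (hk : 2 ≤ k) (u : Fin n) (hu1 : k - 1 ≤ u.val)
    (hpar : (u.val - (k - 1)) % 2 = 1) :
    (Fnk n k).neighborFinset u =
      insert ⟨u.val - 1, by omega⟩ (Finset.univ.filter (fun v : Fin n => v.val < k - 1)) := by
  ext v
  rw [SimpleGraph.mem_neighborFinset, stmt7_fnk_adj hk, Finset.mem_insert, Finset.mem_filter]
  simp only [Finset.mem_univ, true_and, Fin.ext_iff]
  constructor
  · rintro ⟨h1, h2 | h2 | ⟨h2, h3, h4⟩⟩ <;> [omega; (right; exact h2); omega]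
  · rintro (h1 | h1)
    · exact ⟨by omega, Or.inr (Or.inr ⟨hu1, by omega, by omega⟩)⟩
    · exact ⟨by omega, Or.inr (Or.inl h1)⟩

lemma stmt7_nbr_unpaired (hk : 2 ≤ k) (u : Fin n) (hu1 : k - 1 ≤ u.val)
    (hpar : (u.val - (k - 1)) % 2 = 0) (hend : u.val + 1 = n) :
    (Fnk n k).neighborFinset u = Finset.univ.filter (fun v : Fin n => v.val < k - 1) := by
  ext v
  rw [SimpleGraph.mem_neighborFinset, stmt7_fnk_adj hk, Finset.mem_filter]
  simp only [Finset.mem_univ, true_and]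
  constructor
  · rintro ⟨h1, h2 | h2 | ⟨h2, h3, h4⟩⟩ <;> [omega; exact h2; omega]
  · intro h1; exact ⟨by omega, Or.inr (Or.inl h1)⟩

lemma stmt7_sum_filter_lt (hk : 2 ≤ k) (hkn : k ≤ n) (a b : ℝ) :
    ∑ v ∈ Finset.univ.filter (fun v : Fin n => v.val < k - 1),
      (if v.val < k - 1 then a else b) = ((k : ℝ) - 1) * a := by
  rw [Finset.sum_congr rfl (fun v hv => by
    rw [if_pos (Finset.mem_filter.1 hv).2]), Finset.sum_const,
    stmt7_card_filter_lt n (k-1) (by omega), nsmul_eq_mul, Nat.cast_sub (by omega)]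
  norm_num

lemma stmt7_qrow (hk : 2 ≤ k) (hn : 2 * k ^ 2 ≤ n) (a b : ℝ) (u : Fin n) :
    (Qmat (Fnk n k)).mulVec (fun v : Fin n => if v.val < k - 1 then a else b) u =
      if u.val < k - 1 then ((n : ℝ) + k - 3) * a + ((n : ℝ) - k + 1) * b
      else if u.val + 1 = n ∧ (u.val - (k - 1)) % 2 = 0 then
        ((k : ℝ) - 1) * a + ((k : ℝ) - 1) * b
      else ((k : ℝ) - 1) * a + ((k : ℝ) + 1) * b := by
  have hkn : k + 2 ≤ n := by nlinarith
  have hk1n : k - 1 ≤ n := by omega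
  unfold Qmat
  rw [Matrix.add_mulVec, Pi.add_apply, Matrix.mulVec_diagonal,
    SimpleGraph.adjMatrix_mulVec_apply, SimpleGraph.degree]
  by_cases hu : u.val < k - 1
  · rw [stmt7_nbr_clique hk u hu,
      Finset.sum_erase_eq_sub (Finset.mem_univ u),
      stmt7_sum_ite_lt n (k-1) hk1n, Finset.card_erase_of_mem (Finset.mem_univ u),
      Finset.card_univ, Fintype.card_fin, if_pos hu, if_pos hu,
      Nat.cast_sub (by omega), Nat.cast_sub (by omega)]
    push_cast
    ring
  · rcases Nat.even_or_odd (u.val - (k-1)) with hpar | hpar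
    · rw [Nat.even_iff] at hpar
      by_cases hend : u.val + 1 = n
      · rw [stmt7_nbr_unpaired hk u (by omega) hpar hend,
          stmt7_sum_filter_lt hk (by omega), stmt7_card_filter_lt n (k-1) hk1n,
          if_neg hu, if_neg hu, if_pos ⟨hend, hpar⟩, Nat.cast_sub (by omega)]
        ring
      · have hlt : u.val + 1 < n := by omega
        rw [stmt7_nbr_pairedA hk u (by omega) hpar hlt,
          Finset.sum_insert (by simp; omega),
          Finset.card_insert_of_notMem (by simp; omega),
          stmt7_card_filter_lt n (k-1) hk1n, Nat.sub_add_cancel (by omega : 1 ≤ k),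
          stmt7_sum_filter_lt hk (by omega)]
        simp only [Fin.val_mk]
        rw [if_neg hu, if_neg hu,
          if_neg (show ¬ (u.val + 1 < k - 1) by omega),
          if_neg (show ¬ (u.val + 1 = n ∧ (u.val - (k - 1)) % 2 = 0) by omega)]
        ring
    · rw [Nat.odd_iff] at hpar
      rw [stmt7_nbr_pairedB hk u (by omega) hpar,
        Finset.sum_insert (by simp; omega),
        Finset.card_insert_of_notMem (by simp; omega),
        stmt7_card_filter_lt n (k-1) hk1n, Nat.sub_add_cancel (by omega : 1 ≤ k),
        stmt7_sum_filter_lt hk (by omega)]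
      simp only [Fin.val_mk]
      rw [if_neg hu, if_neg hu,
        if_neg (show ¬ (u.val - 1 < k - 1) by omega),
        if_neg (show ¬ (u.val + 1 = n ∧ (u.val - (k - 1)) % 2 = 0) by omega)]
      ring

end rows

lemma stmt7_Qmat_symm {V : Type*} [Fintype V] [DecidableEq V] (G : SimpleGraph V) :
    (Qmat G)ᵀ = Qmat G := by
  unfold Qmat
  rw [Matrix.transpose_add, Matrix.diagonal_transpose, SimpleGraph.transpose_adjMatrix]

lemma stmt7_Qmat_nonneg {V : Type*} [Fintype V] [DecidableEq V] (G : SimpleGraph V)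
    (i j : V) : 0 ≤ Qmat G i j := by
  unfold Qmat
  rw [Matrix.add_apply, Matrix.diagonal_apply, SimpleGraph.adjMatrix_apply]
  split_ifs <;> positivity

lemma stmt7_hterm (k n : ℕ) (hk : 2 ≤ k) (hn : 2 * k ^ 2 ≤ n)
    (a b lam : ℝ) (hb2 : (0:ℝ) ≤ 2*b^2)
    (hrowA : ((n:ℝ)+k-3)*a + ((n:ℝ)-k+1)*b = lam*a)
    (hrowB : ((k:ℝ)-1)*a + ((k:ℝ)+1)*b = lam*b)
    (hn0 : 0 < n)
    (u : Fin n) :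
    lam * ((if u.val < k - 1 then a else b) * (if u.val < k - 1 then a else b))
      - (if u.val < k - 1 then a else b) *
        ((Qmat (Fnk n k)).mulVec (fun v : Fin n => if v.val < k - 1 then a else b) u) ≤
      (if u = (⟨n-1, by omega⟩ : Fin n) then 2*b^2 else 0) := by
  rw [stmt7_qrow hk hn a b u]
  by_cases hu : u.val < k - 1
  · rw [if_pos hu, if_pos hu]
    have heq : lam * (a * a) - a * (((n:ℝ)+k-3)*a + ((n:ℝ)-k+1)*b) = 0 := by
      linear_combination (-a) * hrowA
    split_ifs
    · linarith
    · linarith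
  · rw [if_neg hu, if_neg hu]
    by_cases h2 : u.val + 1 = n ∧ (u.val - (k - 1)) % 2 = 0
    · rw [if_pos h2, if_pos (show u = (⟨n-1, by omega⟩ : Fin n) from
        Fin.ext (by simp only [Fin.val_mk]; omega))]
      have heq : lam * (b * b) - b * (((k:ℝ)-1)*a + ((k:ℝ)-1)*b) = 2*b^2 := by
        linear_combination (-b) * hrowB
      linarith
    · rw [if_neg h2]
      have heq : lam * (b * b) - b * (((k:ℝ)-1)*a + ((k:ℝ)+1)*b) = 0 := by
        linear_combination (-b) * hrowB
      split_ifs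
      · linarith
      · linarith


lemma stmt7_poly (N K : ℝ) (hK : 2 ≤ K) (hN : 2*K^2 ≤ N) :
    (4*N - 8*K^2 + 40*K - 52) * (N-K+1) > 4*(2*N+4*K-13) := by
  nlinarith [mul_nonneg (sub_nonneg.2 hN) (sub_nonneg.2 hK),
    mul_nonneg (sub_nonneg.2 hN) (by linarith : (0:ℝ) ≤ K),
    mul_nonneg (sub_nonneg.2 hK) (sub_nonneg.2 hK),
    mul_nonneg (mul_nonneg (sub_nonneg.2 hK) (sub_nonneg.2 hK)) (by linarith : (0:ℝ) ≤ K),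
    sq_nonneg (N - 2*K^2), mul_nonneg (sub_nonneg.2 hN) (sub_nonneg.2 hN)]


end Stmt7Aux

set_option maxHeartbeats 2000000 in
/-- bounds for `q(F_{n,k})`. -/
theorem stmt_7 (k n : ℕ) (hk : 2 ≤ k) (hn : 2 * k ^ 2 ≤ n) :
    ((n : ℝ) + 2 * k - 5 < qspec (Fnk n k) ∧
      qspec (Fnk n k) ≤
        ((n : ℝ) + 2 * k - 2 +
          Real.sqrt (((n : ℝ) + 2 * k - 6) ^ 2 - 8 * ((k : ℝ) ^ 2 - 4 * k + 3))) / 2) ∧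
    (3 ≤ k → qspec (Fnk n k) ≤ (n : ℝ) + 2 * k - 4) := by
  have hk1 : (2:ℝ) ≤ (k:ℝ) := by exact_mod_cast hk
  have hn1 : 2*(k:ℝ)^2 ≤ (n:ℝ) := by exact_mod_cast hn
  have hkn : k + 2 ≤ n := by nlinarith
  have hn8 : (8:ℝ) ≤ (n:ℝ) := by nlinarith
  set S := Real.sqrt (((n : ℝ) + 2 * k - 6) ^ 2 - 8 * ((k : ℝ) ^ 2 - 4 * k + 3)) with hSdef
  have hm : (0:ℝ) ≤ (n:ℝ) + 2*k - 8 := by linarith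
  have hdisc_gt : ((n:ℝ) + 2*k - 8)^2 <
      ((n : ℝ) + 2 * k - 6) ^ 2 - 8 * ((k : ℝ) ^ 2 - 4 * k + 3) := by nlinarith
  have hdisc_nonneg : 0 ≤ ((n : ℝ) + 2 * k - 6) ^ 2 - 8 * ((k : ℝ) ^ 2 - 4 * k + 3) :=
    le_trans (sq_nonneg _) hdisc_gt.le
  have hS0 : 0 ≤ S := Real.sqrt_nonneg _
  have hS2 : S^2 = ((n : ℝ) + 2 * k - 6) ^ 2 - 8 * ((k : ℝ) ^ 2 - 4 * k + 3) :=
    Real.sq_sqrt hdisc_nonneg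
  have hSgt : (n:ℝ) + 2*k - 8 < S := by nlinarith
  have hSub : S ≤ (n:ℝ) + 2*k - 5 := by
    rw [hSdef]
    calc Real.sqrt (((n : ℝ) + 2 * k - 6) ^ 2 - 8 * ((k : ℝ) ^ 2 - 4 * k + 3))
        ≤ Real.sqrt (((n:ℝ) + 2*k - 5)^2) := Real.sqrt_le_sqrt (by nlinarith)
      _ = (n:ℝ) + 2*k - 5 := Real.sqrt_sq (by linarith)
  set lam := ((n : ℝ) + 2 * k - 2 + S) / 2 with hlam
  set a : ℝ := (n:ℝ) - k + 1 with ha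
  set b : ℝ := lam - ((n:ℝ) + k - 3) with hb
  clear_value b a lam S
  have hapos : 0 < a := by rw [ha]; nlinarith
  have hbpos : 0 < b := by rw [hb, hlam]; linarith
  have hquad : lam^2 - ((n:ℝ)+2*k-2)*lam + (2*(n:ℝ)+2*(k:ℝ)^2-4*k-2) = 0 := by
    rw [hlam]; linear_combination (1/4) * hS2
  have hrowA : ((n:ℝ)+k-3)*a + ((n:ℝ)-k+1)*b = lam*a := by
    rw [ha, hb]; ring
  have hrowB : ((k:ℝ)-1)*a + ((k:ℝ)+1)*b = lam*b := by
    rw [ha, hb]; linear_combination -hquad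
  set G := Fnk n k with hG
  clear_value G
  set w : Fin n → ℝ := fun v => if v.val < k - 1 then a else b with hwdef
  clear_value w
  have hwpos : ∀ i, 0 < w i := by
    intro i
    rw [hwdef]
    dsimp only
    split_ifs
    · exact hapos
    · exact hbpos
  have hwne : w ≠ 0 := by
    intro h
    have h0 := congrFun h ⟨0, by omega⟩
    rw [hwdef] at h0
    simp only [Fin.val_mk, Pi.zero_apply] at h0
    rw [if_pos (by omega : 0 < k - 1)] at h0
    exact hapos.ne' h0
  have hrow : ∀ u, (Qmat G).mulVec w u ≤ lam * w u := by
    intro u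
    rw [hG, hwdef, stmt7_qrow hk hn a b u]
    dsimp only
    by_cases hu : u.val < k - 1
    · rw [if_pos hu, if_pos hu]
      exact le_of_eq hrowA
    · rw [if_neg hu, if_neg hu]
      by_cases h2 : u.val + 1 = n ∧ (u.val - (k - 1)) % 2 = 0
      · rw [if_pos h2]
        nlinarith [hrowB, hbpos]
      · rw [if_neg h2]
        exact le_of_eq hrowB
  have hub : ∀ x : Fin n → ℝ, dotProduct x ((Qmat G).mulVec x) ≤ lam * (dotProduct x x) :=
    stmt7_quad_bound (Qmat G) (stmt7_Qmat_symm G) (stmt7_Qmat_nonneg G) w hwpos lam hrow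
  have hlam_nonneg : 0 ≤ lam := by rw [hlam]; linarith
  have hqle : qspec G ≤ lam :=
    Real.sSup_le (fun μ hμ => stmt7_spectrum_le (Qmat G) lam hub μ hμ) hlam_nonneg
  have hbdd : BddAbove (spectrum ℝ (Qmat G)) :=
    ⟨lam, fun μ hμ => stmt7_spectrum_le (Qmat G) lam hub μ hμ⟩
  -- lower bound preliminaries
  have hww : dotProduct w w = ((k:ℝ)-1)*a^2 + ((n:ℝ)-k+1)*b^2 := by
    rw [hwdef]
    have hconv : ∀ u : Fin n,
        (if u.val < k - 1 then a else b) * (if u.val < k - 1 then a else b)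
          = if u.val < k - 1 then a*a else b*b := by
      intro u; split_ifs <;> rfl
    rw [dotProduct]
    rw [Finset.sum_congr rfl (fun u _ => hconv u),
      stmt7_sum_ite_lt n (k-1) (by omega) (a*a) (b*b), Nat.cast_sub (by omega : 1 ≤ k)]
    push_cast
    ring
  have hwwpos : 0 < dotProduct w w := stmt7_dot_self_pos hwne
  have hQw_lower : lam * (dotProduct w w) - 2*b^2 ≤ dotProduct w ((Qmat G).mulVec w) := by
    have hterm : ∀ u : Fin n, lam * (w u * w u) - w u * ((Qmat G).mulVec w u) ≤
        (if u = (⟨n-1, by omega⟩ : Fin n) then 2*b^2 else 0) := by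
      intro u
      simp only [hG, hwdef]
      exact stmt7_hterm k n hk hn a b lam (by positivity) hrowA hrowB (by omega) u
    have hsum := Finset.sum_le_sum (fun u (_ : u ∈ Finset.univ) => hterm u)
    rw [Finset.sum_ite_eq' Finset.univ (⟨n-1, by omega⟩ : Fin n) (fun _ => 2*b^2),
      if_pos (Finset.mem_univ _)] at hsum
    have hexpand : ∑ u : Fin n, (lam * (w u * w u) - w u * ((Qmat G).mulVec w u))
        = lam * (dotProduct w w) - dotProduct w ((Qmat G).mulVec w) := by
      rw [Finset.sum_sub_distrib, ← Finset.mul_sum, dotProduct, dotProduct]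
    rw [hexpand] at hsum
    linarith
  have hkey : (lam - ((n:ℝ)+2*k-5)) * (dotProduct w w) > 2*b^2 := by
    have h1 : (S - ((n:ℝ)+2*k-8))*((n:ℝ)-k+1) > 4 := by
      have hd : (S - ((n:ℝ)+2*k-8)) * (S + ((n:ℝ)+2*k-8))
          = 4*(n:ℝ) - 8*(k:ℝ)^2 + 40*(k:ℝ) - 52 := by linear_combination hS2
      have hSm_pos : 0 < S + ((n:ℝ)+2*k-8) := by linarith
      have hSm_ub : S + ((n:ℝ)+2*k-8) ≤ 2*(n:ℝ) + 4*(k:ℝ) - 13 := by linarith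
      have hpoly := stmt7_poly (n:ℝ) (k:ℝ) hk1 hn1
      have e1 : (S - ((n:ℝ)+2*k-8)) * ((n:ℝ)-(k:ℝ)+1) * (S + ((n:ℝ)+2*k-8))
          = (4*(n:ℝ) - 8*(k:ℝ)^2 + 40*(k:ℝ) - 52) * ((n:ℝ)-(k:ℝ)+1) := by
        linear_combination ((n:ℝ)-(k:ℝ)+1) * hd
      have e2 : 4 * (S + ((n:ℝ)+2*k-8))
          < (S - ((n:ℝ)+2*k-8)) * ((n:ℝ)-(k:ℝ)+1) * (S + ((n:ℝ)+2*k-8)) := by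
        rw [e1]; linarith
      exact (mul_lt_mul_iff_of_pos_right hSm_pos).1 e2
    have h2 : lam - ((n:ℝ)+2*k-5) = (S - ((n:ℝ)+2*k-8))/2 := by rw [hlam]; ring
    have h3 : (dotProduct w w) ≥ ((n:ℝ)-k+1)*b^2 := by
      rw [hww]; nlinarith [sq_nonneg a]
    have h4 : 0 < b^2 := by positivity
    rw [h2]
    nlinarith [h1, h3, h4, hSgt]
  have hlow : (n:ℝ) + 2*k - 5 < qspec G := by
    have hray := stmt7_sSup_spectrum_ge (Qmat G) (stmt7_Qmat_symm G) lam hub hbdd w hwne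
    have hstep : (n:ℝ) + 2*k - 5 < (dotProduct w ((Qmat G).mulVec w)) / (dotProduct w w) := by
      rw [lt_div_iff₀ hwwpos]
      nlinarith [hQw_lower, hkey]
    exact lt_of_lt_of_le hstep hray
  refine ⟨⟨hlow, hqle⟩, ?_⟩
  intro hk3
  have hk3' : (3:ℝ) ≤ (k:ℝ) := by exact_mod_cast hk3
  have hSub2 : S ≤ (n:ℝ) + 2*k - 6 := by
    rw [hSdef]
    calc Real.sqrt (((n : ℝ) + 2 * k - 6) ^ 2 - 8 * ((k : ℝ) ^ 2 - 4 * k + 3))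
        ≤ Real.sqrt (((n:ℝ) + 2*k - 6)^2) := Real.sqrt_le_sqrt (by nlinarith)
      _ = (n:ℝ) + 2*k - 6 := Real.sqrt_sq (by linarith)
  calc qspec G ≤ lam := hqle
    _ ≤ (n:ℝ) + 2*k - 4 := by rw [hlam]; linarith
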